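/- The real span of the matrices F_j = Λ^j − Λ^{−j} (j ≥ 1) is a maximal commutative Lie subalgebra of the Lie algebra AS(R) of antisymmetric matrices in LT_Z(R): any antisymmetric A with finitely many nonzero upper diagonals commuting with all F_j is a real linear combination of the F_j. -/

import Mathlib

noncomputable def matMul {R : Type*} [CommRing R] (A B : ℤ → ℤ → R) : ℤ → ℤ → R :=
  fun i j => ∑ᶠ k, A i k * B k j

def LTZ {R : Type*} [CommRing R] (A : ℤ → ℤ → R) : Prop :=
  ∃ N : ℤ, ∀ i j : ℤ, N < j - i → A i j = 0

def shiftPow (m : ℤ) : ℤ → ℤ → ℝ :=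
  fun i j => if j = i + m then 1 else 0

/-- `A^T = -A`. -/
def AntiSymmetric' (A : ℤ → ℤ → ℝ) : Prop :=
  ∀ i j : ℤ, A j i = -A i j

/-- The basic directions `F_j = Λ^j - Λ^{-j}`, `j ≥ 1`. -/
def Fset : Set (ℤ → ℤ → ℝ) :=
  {A | ∃ j : ℤ, 1 ≤ j ∧ A = shiftPow j - shiftPow (-j)}

/-!
A matrix commuting with `F₁ = Λ - Λ⁻¹` satisfies `A i (k-1) - A i (k+1) = A (i+1) k - A (i-1) k`,
so the defect `A i j - A (i+1) (j+1)` changes sign when moved one step away from the diagonal.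
Far above the diagonal it vanishes, hence it vanishes everywhere: `A` is Toeplitz. The span of the
`F_j` is exactly the space of banded antisymmetric Toeplitz matrices, and Toeplitz matrices commute
with each other because reindexing `k ↦ i + j - k` swaps the two factors of each product entry.
-/

open Submodule

def IsToeplitz {R : Type*} (A : ℤ → ℤ → R) : Prop :=
  ∀ i j, A i j = A 0 (j - i)

section Toeplitz

variable {R : Type*}

theorem IsToeplitz.of_apply_add_one {A : ℤ → ℤ → R} (h : ∀ i j, A (i + 1) (j + 1) = A i j) :
    IsToeplitz A := by
  have shift : ∀ t i j, A (i + t) (j + t) = A i j := by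
    intro t
    induction t using Int.induction_on with
    | zero => simp
    | succ t ih => intro i j; rw [← add_assoc, ← add_assoc, h, ih]
    | pred t ih =>
      intro i j
      rw [← ih i j, ← h]
      congr 1 <;> ring
  intro i j
  simpa using shift i 0 (j - i)

theorem IsToeplitz.matMul_comm [CommRing R] {A B : ℤ → ℤ → R} (hA : IsToeplitz A)
    (hB : IsToeplitz B) : matMul A B = matMul B A := by
  funext i j
  have reflect : ∀ k, A i k * B k j = B i (i + j - k) * A (i + j - k) j := by
    intro k
    rw [hA, hB, hA (i + j - k), hB i, mul_comm]
    congr 2 <;> ring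
  simp only [matMul, finsum_congr reflect]
  exact finsum_comp_equiv (Equiv.subLeft (i + j)) (f := fun l => B i l * A l j)

variable (R) [CommRing R]

def ltzSubmodule : Submodule R (ℤ → ℤ → R) where
  carrier := {A | LTZ A}
  zero_mem' := ⟨0, fun _ _ _ => rfl⟩
  add_mem' := by
    rintro A B ⟨N, hA⟩ ⟨M, hB⟩
    exact ⟨max N M, fun i j h => by simp [hA i j (by omega), hB i j (by omega)]⟩
  smul_mem' := by
    rintro c A ⟨N, hA⟩
    exact ⟨N, fun i j h => by simp [hA i j h]⟩

def toeplitzSubmodule : Submodule R (ℤ → ℤ → R) where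
  carrier := {A | IsToeplitz A}
  zero_mem' := fun _ _ => rfl
  add_mem' := by
    intro A B hA hB i j
    simp [hA i j, hB i j]
  smul_mem' := by
    intro c A hA i j
    simp [hA i j]

end Toeplitz

def antiSymmetricSubmodule : Submodule ℝ (ℤ → ℤ → ℝ) where
  carrier := {A | AntiSymmetric' A}
  zero_mem' := fun _ _ => by simp
  add_mem' := by
    intro A B hA hB i j
    simp only [Pi.add_apply, hA i j, hB i j, neg_add]
  smul_mem' := by
    intro c A hA i j
    simp [hA i j]

theorem shiftPow_mem_ltzSubmodule (m : ℤ) : shiftPow m ∈ ltzSubmodule ℝ :=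
  ⟨m, fun i j h => if_neg (by omega)⟩

theorem shiftPow_mem_toeplitzSubmodule (m : ℤ) : shiftPow m ∈ toeplitzSubmodule ℝ := by
  intro i j
  simp only [shiftPow]
  congr 1
  exact propext (by omega)

theorem Fset_subset_ltz_inf_antiSymmetric_inf_toeplitz :
    Fset ⊆ ltzSubmodule ℝ ⊓ antiSymmetricSubmodule ⊓ toeplitzSubmodule ℝ := by
  rintro _ ⟨m, -, rfl⟩
  refine ⟨⟨sub_mem (shiftPow_mem_ltzSubmodule _) (shiftPow_mem_ltzSubmodule _), ?_⟩,
    sub_mem (shiftPow_mem_toeplitzSubmodule _) (shiftPow_mem_toeplitzSubmodule _)⟩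
  intro i j
  simp only [Pi.sub_apply, shiftPow]
  split_ifs <;> first | (exfalso; omega) | norm_num

theorem sum_smul_sub_shiftPow_apply (c : ℤ → ℝ) (s : Finset ℤ) (i j : ℤ) :
    (∑ m ∈ s, c m • (shiftPow m - shiftPow (-m))) i j =
      (if j - i ∈ s then c (j - i) else 0) - (if i - j ∈ s then c (i - j) else 0) := by
  have h₁ : ∀ m, shiftPow m i j = if j - i = m then 1 else 0 := fun m => by
    simp only [shiftPow]; congr 1; exact propext (by omega)
  have h₂ : ∀ m, shiftPow (-m) i j = if i - j = m then 1 else 0 := fun m => by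
    simp only [shiftPow]; congr 1; exact propext (by omega)
  simp only [Finset.sum_apply, Pi.smul_apply, Pi.sub_apply, smul_eq_mul, mul_sub,
    Finset.sum_sub_distrib, h₂]
  simp only [h₁, mul_ite, mul_one, mul_zero, Finset.sum_ite_eq]

theorem mem_span_Fset_of_isToeplitz {A : ℤ → ℤ → ℝ} (hL : LTZ A) (hS : AntiSymmetric' A)
    (hT : IsToeplitz A) : A ∈ span ℝ Fset := by
  obtain ⟨N, hN⟩ := hL
  have expansion : A = ∑ m ∈ Finset.Icc 1 N, A 0 m • (shiftPow m - shiftPow (-m)) := by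
    funext i j
    rw [sum_smul_sub_shiftPow_apply, ← hT i j, ← hT j i, hS i j]
    simp only [Finset.mem_Icc]
    rcases lt_trichotomy (j - i) 0 with h | h | h
    · rw [if_neg (by omega)]
      split_ifs
      · ring
      · rw [sub_zero, ← neg_eq_zero, ← hS i j]
        exact hN j i (by omega)
    · have : A i i = 0 := by linarith [hS i i]
      rw [if_neg (by omega), if_neg (by omega), show j = i by omega, this, sub_zero]
    · rw [if_neg (show ¬(1 ≤ i - j ∧ i - j ≤ N) by omega), sub_zero]
      split_ifs
      · rfl
      · exact hN i j (by omega)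
  rw [expansion]
  exact sum_mem fun m hm =>
    smul_mem _ _ (subset_span ⟨m, (Finset.mem_Icc.mp hm).1, rfl⟩)

theorem span_Fset_eq :
    span ℝ Fset = ltzSubmodule ℝ ⊓ antiSymmetricSubmodule ⊓ toeplitzSubmodule ℝ :=
  le_antisymm (span_le.mpr Fset_subset_ltz_inf_antiSymmetric_inf_toeplitz)
    fun _ ⟨⟨hL, hS⟩, hT⟩ => mem_span_Fset_of_isToeplitz hL hS hT

theorem matMul_sub_shiftPow_apply (A : ℤ → ℤ → ℝ) {m : ℤ} (hm : m ≠ 0) (i k : ℤ) :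
    matMul A (shiftPow m - shiftPow (-m)) i k = A i (k - m) - A i (k + m) := by
  have hsupp : Function.support (fun l => A i l * (shiftPow m - shiftPow (-m)) l k) ⊆
      ({k - m, k + m} : Finset ℤ) := by
    refine Function.support_subset_iff'.mpr fun l hl => ?_
    simp only [Finset.coe_insert, Finset.coe_singleton, Set.mem_insert_iff,
      Set.mem_singleton_iff, not_or] at hl
    simp only [Pi.sub_apply, shiftPow]
    rw [if_neg (by omega), if_neg (by omega), sub_zero, mul_zero]
  rw [matMul, finsum_eq_sum_of_support_subset _ hsupp, Finset.sum_pair (by omega)]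
  simp only [Pi.sub_apply, shiftPow]
  split_ifs <;> first | (exfalso; omega) | ring

theorem sub_shiftPow_matMul_apply (A : ℤ → ℤ → ℝ) {m : ℤ} (hm : m ≠ 0) (i k : ℤ) :
    matMul (shiftPow m - shiftPow (-m)) A i k = A (i + m) k - A (i - m) k := by
  have hsupp : Function.support (fun l => (shiftPow m - shiftPow (-m)) i l * A l k) ⊆
      ({i + m, i - m} : Finset ℤ) := by
    refine Function.support_subset_iff'.mpr fun l hl => ?_
    simp only [Finset.coe_insert, Finset.coe_singleton, Set.mem_insert_iff,
      Set.mem_singleton_iff, not_or] at hl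
    simp only [Pi.sub_apply, shiftPow]
    rw [if_neg (by omega), if_neg (by omega), sub_zero, zero_mul]
  rw [matMul, finsum_eq_sum_of_support_subset _ hsupp, Finset.sum_pair (by omega)]
  simp only [Pi.sub_apply, shiftPow]
  split_ifs <;> first | (exfalso; omega) | ring

theorem isToeplitz_of_matMul_comm {A : ℤ → ℤ → ℝ} (hL : LTZ A)
    (hcomm : matMul A (shiftPow 1 - shiftPow (-1)) = matMul (shiftPow 1 - shiftPow (-1)) A) :
    IsToeplitz A := by
  obtain ⟨N, hN⟩ := hL
  have relation : ∀ i k, A i (k - 1) - A i (k + 1) = A (i + 1) k - A (i - 1) k := fun i k => by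
    simpa only [matMul_sub_shiftPow_apply A one_ne_zero, sub_shiftPow_matMul_apply A one_ne_zero]
      using congrFun (congrFun hcomm i) k
  have shift_invariant : ∀ n : ℕ, ∀ i j, N < j - i + n → A (i + 1) (j + 1) = A i j := by
    intro n
    induction n with
    | zero => intro i j h; rw [hN i j (by omega), hN _ _ (by omega)]
    | succ n ih =>
      intro i j h
      have h₁ := ih (i - 1) (j + 1) (by omega)
      have h₂ := relation i (j + 1)
      simp only [sub_add_cancel, add_sub_cancel_right] at h₁ h₂
      linarith
  exact IsToeplitz.of_apply_add_one fun i j => shift_invariant ((N - (j - i)).toNat + 1) i j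
    (by omega)

/-- The real span of the `F_j` is a maximal commutative Lie subalgebra of the
antisymmetric matrices in `LT_ℤ(ℝ)`: it is commutative, consists of antisymmetric
matrices in `LT_ℤ(ℝ)`, and any antisymmetric `A ∈ LT_ℤ(ℝ)` commuting with all
`F_j` is a real linear combination of the `F_j`. -/
theorem statement5 :
    (∀ A ∈ Submodule.span ℝ Fset, LTZ A ∧ AntiSymmetric' A) ∧
    (∀ A ∈ Submodule.span ℝ Fset, ∀ B ∈ Submodule.span ℝ Fset,
        matMul A B - matMul B A = 0) ∧
    (∀ A : ℤ → ℤ → ℝ, LTZ A → AntiSymmetric' A →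
        (∀ F ∈ Fset, matMul A F = matMul F A) →
        A ∈ Submodule.span ℝ Fset) := by
  simp only [span_Fset_eq]
  refine ⟨fun A hA => hA.1, fun A hA B hB => ?_, fun A hL hS hcomm => ?_⟩
  · rw [hA.2.matMul_comm hB.2, sub_self]
  · exact ⟨⟨hL, hS⟩, isToeplitz_of_matMul_comm hL (hcomm _ ⟨1, le_rfl, rfl⟩)⟩
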